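/- arXiv:2006.07057 — 3 statements merged into one kernel-verified Lean document; each statement's English description precedes it below -/
import Mathlib

section
/- Let q > 0, let ρ_q be the Gaussian measure N(0, (qε/4)·Id) on R^d, and define φ(x,u) = (2q)^{d/4}·exp(-2ε⁻¹‖x-u‖²)·exp(ε⁻¹‖u‖²/q). Then for all x, y ∈ R^d, exp(-ε⁻¹‖x-y‖²) = ∫_{R^d} φ(x,u)·φ(y,u) dρ_q(u). -/
/-!
Both the feature map and the Gaussian measure factor over coordinates, so the integral is a
product of one-dimensional integrals. In dimension one, completing the square turns the
`N(0, qε/4)` density times `φ(a, t) φ(b, t)` into `exp (-ε⁻¹ (a - b)²)` times the density of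
`N((a + b) / 2, ε / 8)`, which integrates to one.
-/

open Real MeasureTheory ProbabilityTheory

/-- The centered Gaussian measure `N(0, σ² Id)` on `EuclideanSpace ℝ (Fin d)`,
built as a product of one-dimensional Gaussians. -/
noncomputable def gaussianPi (d : ℕ) (σ2 : ℝ) :
    Measure (EuclideanSpace ℝ (Fin d)) :=
  (Measure.pi fun _ : Fin d => gaussianReal 0 σ2.toNNReal).map
    (MeasurableEquiv.toLp 2 (Fin d → ℝ))

theorem integral_gaussianPi_prod (d : ℕ) (σ2 : ℝ) (f : Fin d → ℝ → ℝ) :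
    ∫ u, ∏ i, f i (u i) ∂gaussianPi d σ2 =
      ∏ i, ∫ t, f i t ∂gaussianReal 0 σ2.toNNReal := by
  rw [gaussianPi, integral_map_equiv]
  exact integral_fintype_prod_eq_prod f

theorem EuclideanSpace.exp_mul_norm_sq {ι : Type*} [Fintype ι] (c : ℝ)
    (w : EuclideanSpace ℝ ι) :
    exp (c * ‖w‖ ^ 2) = ∏ i, exp (c * w i ^ 2) := by
  rw [EuclideanSpace.real_norm_sq_eq, Finset.mul_sum, exp_sum]

noncomputable def gaussianFeature (ε q a t : ℝ) : ℝ :=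
  (2 * q) ^ (1 / 4 : ℝ) * exp (-2 * ε⁻¹ * (a - t) ^ 2) * exp (ε⁻¹ * t ^ 2 / q)

theorem prod_gaussianFeature {d : ℕ} {q : ℝ} (hq : 0 ≤ q) (ε : ℝ)
    (x u : EuclideanSpace ℝ (Fin d)) :
    ∏ i, gaussianFeature ε q (x i) (u i) =
      (2 * q) ^ ((d : ℝ) / 4) * exp (-2 * ε⁻¹ * ‖x - u‖ ^ 2) * exp (ε⁻¹ * ‖u‖ ^ 2 / q) := by
  have hconst : (2 * q) ^ ((d : ℝ) / 4) = ∏ _i : Fin d, (2 * q) ^ (1 / 4 : ℝ) := by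
    rw [Finset.prod_const, Finset.card_fin, ← rpow_mul_natCast (by positivity)]
    ring_nf
  simp_rw [gaussianFeature, Finset.prod_mul_distrib, ← hconst, mul_div_right_comm ε⁻¹,
    EuclideanSpace.exp_mul_norm_sq, PiLp.sub_apply]

theorem gaussianPDFReal_mul_gaussianFeature_mul {ε q : ℝ} (hε : 0 < ε) (hq : 0 < q)
    (a b t : ℝ) :
    gaussianPDFReal 0 (q * ε / 4).toNNReal t *
        (gaussianFeature ε q a t * gaussianFeature ε q b t) =
      exp (-ε⁻¹ * (a - b) ^ 2) *
        ((√(π / (4 * ε⁻¹)))⁻¹ * exp (-(4 * ε⁻¹) * (t - (a + b) / 2) ^ 2)) := by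
  have hconst :
      (√(2 * π * (q * ε / 4)))⁻¹ * ((2 * q) ^ (1 / 4 : ℝ) * (2 * q) ^ (1 / 4 : ℝ)) =
        (√(π / (4 * ε⁻¹)))⁻¹ := by
    rw [← rpow_add (by positivity), show 2 * π * (q * ε / 4) = (2 * q) * (π / (4 * ε⁻¹)) by
      field_simp, sqrt_mul (by positivity), sqrt_eq_rpow]
    norm_num
    field_simp
  have hsquare : -(t - 0) ^ 2 / (2 * (q * ε / 4)) + (-2 * ε⁻¹ * (a - t) ^ 2 + ε⁻¹ * t ^ 2 / q +
      (-2 * ε⁻¹ * (b - t) ^ 2 + ε⁻¹ * t ^ 2 / q)) =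
      -ε⁻¹ * (a - b) ^ 2 + -(4 * ε⁻¹) * (t - (a + b) / 2) ^ 2 := by
    field_simp
    ring
  rw [gaussianPDFReal, coe_toNNReal _ (by positivity), gaussianFeature, gaussianFeature]
  calc _ = (√(2 * π * (q * ε / 4)))⁻¹ * ((2 * q) ^ (1 / 4 : ℝ) * (2 * q) ^ (1 / 4 : ℝ)) *
        exp (-(t - 0) ^ 2 / (2 * (q * ε / 4)) + (-2 * ε⁻¹ * (a - t) ^ 2 + ε⁻¹ * t ^ 2 / q +
          (-2 * ε⁻¹ * (b - t) ^ 2 + ε⁻¹ * t ^ 2 / q))) := by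
        simp only [exp_add]; ring
    _ = _ := by rw [hconst, hsquare, exp_add]; ring

theorem integral_gaussianFeature_mul {ε q : ℝ} (hε : 0 < ε) (hq : 0 < q) (a b : ℝ) :
    ∫ t, gaussianFeature ε q a t * gaussianFeature ε q b t
        ∂gaussianReal 0 (q * ε / 4).toNNReal =
      exp (-ε⁻¹ * (a - b) ^ 2) := by
  have hv : (q * ε / 4).toNNReal ≠ 0 := by positivity
  simp_rw [integral_gaussianReal_eq_integral_smul hv, smul_eq_mul,
    gaussianPDFReal_mul_gaussianFeature_mul hε hq, integral_const_mul,
    integral_sub_right_eq_self (fun t => exp (-(4 * ε⁻¹) * t ^ 2)), integral_gaussian]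
  rw [inv_mul_cancel₀ (by positivity), mul_one]

theorem gaussian_kernel_feature_decomposition (d : ℕ) (ε : ℝ) (hε : 0 < ε)
    (q : ℝ) (hq : 0 < q)
    (φ : EuclideanSpace ℝ (Fin d) → EuclideanSpace ℝ (Fin d) → ℝ)
    (hφ : ∀ x u, φ x u =
      (2 * q) ^ ((d : ℝ) / 4) * exp (-2 * ε⁻¹ * ‖x - u‖ ^ 2) * exp (ε⁻¹ * ‖u‖ ^ 2 / q))
    (x y : EuclideanSpace ℝ (Fin d)) :
    exp (-ε⁻¹ * ‖x - y‖ ^ 2) = ∫ u, φ x u * φ y u ∂(gaussianPi d (q * ε / 4)) := by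
  simp_rw [hφ, ← prod_gaussianFeature hq.le, ← Finset.prod_mul_distrib]
  rw [integral_gaussianPi_prod d _ fun i t =>
    gaussianFeature ε q (x i) t * gaussianFeature ε q (y i) t]
  simp_rw [integral_gaussianFeature_mul hε hq, EuclideanSpace.exp_mul_norm_sq, PiLp.sub_apply]
end

section
/- Let k and k_θ be two positive kernel matrices (entrywise positive n×n matrices) and suppose for all entries (i,j), |K_θ[i,j]/K[i,j] - 1| ≤ τ with 0 < τ < 1. Then for all α, β ∈ R^n, |f(α,β) - f_θ(α,β)| ≤ ε·τ·⟨e^{α/ε}, K e^{β/ε}⟩ and |f(α,β) - f_θ(α,β)| ≤ ε·(τ/(1-τ))·⟨e^{α/ε}, K_θ e^{β/ε}⟩, where f(α,β) = ⟨α,a⟩ + ⟨β,b⟩ - ε⟨e^{α/ε}, K e^{β/ε}⟩ and f_θ is defined analogously with K_θ. -/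
/-!
Both objectives share their linear part, so `f - fθ = ε ⟨e^{α/ε}, (Kθ - K) e^{β/ε}⟩`. The ratio
bound gives `|Kθ - K| ≤ τ K` entrywise, hence also `Kθ ≥ (1 - τ) K`, i.e. `τ K ≤ τ/(1-τ) Kθ`;
since the weights `e^{α/ε}`, `e^{β/ε}` are positive, these entrywise bounds pass to the bilinear forms.
-/

open Real Finset

lemma abs_sub_le_mul_of_abs_div_sub_one_le {k kθ τ : ℝ} (hk : 0 < k)
    (h : |kθ / k - 1| ≤ τ) : |kθ - k| ≤ τ * k := by
  have hsplit : kθ - k = (kθ / k - 1) * k := by field_simp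
  rw [hsplit, abs_mul, abs_of_pos hk]
  exact mul_le_mul_of_nonneg_right h hk.le

lemma abs_sub_le_div_one_sub_mul_of_abs_div_sub_one_le {k kθ τ : ℝ} (hk : 0 < k)
    (h : |kθ / k - 1| ≤ τ) (hτ1 : τ < 1) : |kθ - k| ≤ τ / (1 - τ) * kθ := by
  have hτ0 : 0 ≤ τ := (abs_nonneg _).trans h
  have hdiff := abs_sub_le_mul_of_abs_div_sub_one_le hk h
  have hk_le : k ≤ kθ / (1 - τ) := by
    rw [le_div_iff₀ (by linarith)]
    linarith [(abs_le.mp hdiff).1]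
  calc |kθ - k| ≤ τ * k := hdiff
    _ ≤ τ * (kθ / (1 - τ)) := mul_le_mul_of_nonneg_left hk_le hτ0
    _ = τ / (1 - τ) * kθ := by ring

lemma abs_sum_sum_mul_sub_le {ι κ : Type*} [Fintype ι] [Fintype κ] {u : ι → ℝ} {v : κ → ℝ}
    {M M' N : ι → κ → ℝ} {c : ℝ} (hu : ∀ i, 0 ≤ u i) (hv : ∀ j, 0 ≤ v j)
    (h : ∀ i j, |M' i j - M i j| ≤ c * N i j) :
    |∑ i, ∑ j, u i * M' i j * v j - ∑ i, ∑ j, u i * M i j * v j| ≤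
      c * ∑ i, ∑ j, u i * N i j * v j := by
  have hterm : ∀ i j, |u i * M' i j * v j - u i * M i j * v j| ≤ c * (u i * N i j * v j) := by
    intro i j
    rw [← sub_mul, ← mul_sub, abs_mul, abs_mul, abs_of_nonneg (hu i), abs_of_nonneg (hv j)]
    calc u i * |M' i j - M i j| * v j ≤ u i * (c * N i j) * v j :=
          mul_le_mul_of_nonneg_right (mul_le_mul_of_nonneg_left (h i j) (hu i)) (hv j)
      _ = c * (u i * N i j * v j) := by ring
  calc |∑ i, ∑ j, u i * M' i j * v j - ∑ i, ∑ j, u i * M i j * v j|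
      = |∑ i, ∑ j, (u i * M' i j * v j - u i * M i j * v j)| := by
        simp only [sum_sub_distrib]
    _ ≤ ∑ i, ∑ j, |u i * M' i j * v j - u i * M i j * v j| :=
        (abs_sum_le_sum_abs _ _).trans (sum_le_sum fun i _ => abs_sum_le_sum_abs _ _)
    _ ≤ ∑ i, ∑ j, c * (u i * N i j * v j) := by
        gcongr with i _ j _
        exact hterm i j
    _ = c * ∑ i, ∑ j, u i * N i j * v j := by simp only [mul_sum]

theorem dual_objective_perturbation_bound_general (n : ℕ) (ε : ℝ) (hε : 0 < ε)
    (a b : Fin n → ℝ)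
    (K Kθ : Matrix (Fin n) (Fin n) ℝ)
    (hK : ∀ i j, 0 < K i j)
    (τ : ℝ) (hτ1 : τ < 1)
    (hratio : ∀ i j, |Kθ i j / K i j - 1| ≤ τ)
    (f fθ : (Fin n → ℝ) → (Fin n → ℝ) → ℝ)
    (hf : ∀ α β, f α β = ∑ i, α i * a i + ∑ j, β j * b j -
      ε * ∑ i, ∑ j, exp (α i / ε) * K i j * exp (β j / ε))
    (hfθ : ∀ α β, fθ α β = ∑ i, α i * a i + ∑ j, β j * b j -
      ε * ∑ i, ∑ j, exp (α i / ε) * Kθ i j * exp (β j / ε))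
    (α β : Fin n → ℝ) :
    |f α β - fθ α β| ≤ ε * τ * ∑ i, ∑ j, exp (α i / ε) * K i j * exp (β j / ε) ∧
    |f α β - fθ α β| ≤
      ε * (τ / (1 - τ)) * ∑ i, ∑ j, exp (α i / ε) * Kθ i j * exp (β j / ε) := by
  have hdiff : f α β - fθ α β =
      ε * (∑ i, ∑ j, exp (α i / ε) * Kθ i j * exp (β j / ε) -
        ∑ i, ∑ j, exp (α i / ε) * K i j * exp (β j / ε)) := by
    rw [hf, hfθ]
    ring
  have hu : ∀ i, 0 ≤ exp (α i / ε) := fun _ => (exp_pos _).le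
  have hv : ∀ j, 0 ≤ exp (β j / ε) := fun _ => (exp_pos _).le
  rw [hdiff, abs_mul, abs_of_pos hε, mul_assoc, mul_assoc]
  exact ⟨mul_le_mul_of_nonneg_left (abs_sum_sum_mul_sub_le hu hv fun i j =>
      abs_sub_le_mul_of_abs_div_sub_one_le (hK i j) (hratio i j)) hε.le,
    mul_le_mul_of_nonneg_left (abs_sum_sum_mul_sub_le hu hv fun i j =>
      abs_sub_le_div_one_sub_mul_of_abs_div_sub_one_le (hK i j) (hratio i j) hτ1) hε.le⟩

theorem dual_objective_perturbation_bound (n : ℕ) (ε : ℝ) (hε : 0 < ε)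
    (a b : Fin n → ℝ) (ha : ∀ i, 0 < a i) (hb : ∀ i, 0 < b i)
    (ha1 : ∑ i, a i = 1) (hb1 : ∑ i, b i = 1)
    (K Kθ : Matrix (Fin n) (Fin n) ℝ)
    (hK : ∀ i j, 0 < K i j) (hKθ : ∀ i j, 0 < Kθ i j)
    (τ : ℝ) (hτ0 : 0 < τ) (hτ1 : τ < 1)
    (hratio : ∀ i j, |Kθ i j / K i j - 1| ≤ τ)
    (f fθ : (Fin n → ℝ) → (Fin n → ℝ) → ℝ)
    (hf : ∀ α β, f α β = ∑ i, α i * a i + ∑ j, β j * b j -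
      ε * ∑ i, ∑ j, exp (α i / ε) * K i j * exp (β j / ε))
    (hfθ : ∀ α β, fθ α β = ∑ i, α i * a i + ∑ j, β j * b j -
      ε * ∑ i, ∑ j, exp (α i / ε) * Kθ i j * exp (β j / ε))
    (α β : Fin n → ℝ) :
    |f α β - fθ α β| ≤ ε * τ * ∑ i, ∑ j, exp (α i / ε) * K i j * exp (β j / ε) ∧
    |f α β - fθ α β| ≤
      ε * (τ / (1 - τ)) * ∑ i, ∑ j, exp (α i / ε) * Kθ i j * exp (β j / ε) :=
  dual_objective_perturbation_bound_general n ε hε a b K Kθ hK τ hτ1 hratio f fθ hf hfθ α β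
end

section
/- Let (α*, β*) be an optimal solution of the entropic OT dual with positive kernel matrix K ∈ R_{>0}^{n×n} and marginals a, b ∈ Δ_n. Then max_i α*_i - min_i α*_i ≤ ε·R(K) and max_j β*_j - min_j β*_j ≤ ε·R(K), where R(K) = -log( ι · (min_{i,j} K[i,j]) / (max_{i,j} K[i,j]) ) and ι = min_{i,j}(a_i, b_j). -/
/-!
At a maximiser, each coordinate `αᵢ` solves the concave one-dimensional problem
`x ↦ x aᵢ - ε eˣᐟᵋ Sᵢ` with `Sᵢ = ∑ⱼ Kᵢⱼ e^{βⱼ/ε}`, so `αᵢ = ε (log aᵢ - log Sᵢ)`.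
Every `Sᵢ` lies between `(min K) E` and `(max K) E` for `E = ∑ⱼ e^{βⱼ/ε}`, and `ι ≤ aᵢ ≤ 1`,
hence two coordinates of `α` differ by at most `ε (log (max K / min K) - log ι)`.
The bound for `β` is the same statement for the transposed problem.
-/

open Real
open scoped Matrix

theorem apply_le_apply_of_forall_sum_le {ι β M : Type*} [Fintype ι] [AddCommMonoid M]
    [PartialOrder M] [IsOrderedCancelAddMonoid M] (φ : ι → β → M) (x₀ : ι → β)
    (h : ∀ x : ι → β, ∑ k, φ k (x k) ≤ ∑ k, φ k (x₀ k)) (i : ι) (t : β) :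
    φ i t ≤ φ i (x₀ i) := by
  classical
  have hupd := h (Function.update x₀ i t)
  simp only [Function.apply_update φ x₀ i t] at hupd
  rw [Finset.sum_update_of_mem (Finset.mem_univ i), ← Finset.add_sum_erase _ _ (Finset.mem_univ i),
    Finset.sdiff_singleton_eq_erase] at hupd
  exact le_of_add_le_add_right hupd

theorem exp_div_mul_eq_of_forall_le {ε c S x₀ : ℝ} (hε : ε ≠ 0)
    (h : ∀ x, x * c - ε * (exp (x / ε) * S) ≤ x₀ * c - ε * (exp (x₀ / ε) * S)) :
    exp (x₀ / ε) * S = c := by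
  have hderiv : HasDerivAt (fun x => x * c - ε * (exp (x / ε) * S))
      (1 * c - ε * (exp (x₀ / ε) * (1 / ε) * S)) x₀ :=
    ((hasDerivAt_id x₀).mul_const c).sub
      ((((hasDerivAt_id x₀).div_const ε).exp.mul_const S).const_mul ε)
  have hzero := IsLocalMax.hasDerivAt_eq_zero (Filter.Eventually.of_forall h) hderiv
  field_simp at hzero
  linarith

theorem eq_mul_log_sub_log_of_exp_div_mul_eq {ε x S c : ℝ} (hε : ε ≠ 0) (hS : 0 < S)
    (h : exp (x / ε) * S = c) : x = ε * (log c - log S) := by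
  rw [← h, log_mul (exp_pos _).ne' hS.ne', log_exp]
  field_simp
  ring

theorem ciSup_sub_ciInf_le {ι : Type*} [Finite ι] [Nonempty ι] {f : ι → ℝ} {C : ℝ}
    (h : ∀ i j, f i - f j ≤ C) : (⨆ i, f i) - ⨅ i, f i ≤ C := by
  obtain ⟨i, hi⟩ := exists_eq_ciSup_of_finite (f := f)
  obtain ⟨j, hj⟩ := exists_eq_ciInf_of_finite (f := f)
  rw [← hi, ← hj]
  exact h i j

section EntropicDual

variable {m n : Type*} [Fintype m] [Fintype n] {ε : ℝ} {a : m → ℝ} {b : n → ℝ}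
  {K : Matrix m n ℝ}

noncomputable def entropicDual (ε : ℝ) (a : m → ℝ) (b : n → ℝ) (K : Matrix m n ℝ)
    (α : m → ℝ) (β : n → ℝ) : ℝ :=
  ∑ i, α i * a i + ∑ j, β j * b j - ε * ∑ i, ∑ j, exp (α i / ε) * K i j * exp (β j / ε)

theorem entropicDual_transpose (α : m → ℝ) (β : n → ℝ) :
    entropicDual ε a b K α β = entropicDual ε b a Kᵀ β α := by
  unfold entropicDual
  rw [Finset.sum_comm (f := fun i j => exp (α i / ε) * K i j * exp (β j / ε)),
    add_comm (∑ i, α i * a i)]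
  simp only [Matrix.transpose_apply, mul_comm, mul_left_comm, mul_assoc]

theorem entropicDual_eq_sum_add (α : m → ℝ) (β : n → ℝ) :
    entropicDual ε a b K α β =
      ∑ i, (α i * a i - ε * (exp (α i / ε) * ∑ j, K i j * exp (β j / ε))) + ∑ j, β j * b j := by
  simp only [entropicDual, Finset.sum_sub_distrib, Finset.mul_sum, mul_assoc]
  ring

variable {αs : m → ℝ} {βs : n → ℝ}

theorem entropicDual_foc (hε : ε ≠ 0)
    (hmax : ∀ α β, entropicDual ε a b K α β ≤ entropicDual ε a b K αs βs) (i : m) :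
    exp (αs i / ε) * ∑ j, K i j * exp (βs j / ε) = a i := by
  refine exp_div_mul_eq_of_forall_le hε fun x => ?_
  refine apply_le_apply_of_forall_sum_le
    (fun i x => x * a i - ε * (exp (x / ε) * ∑ j, K i j * exp (βs j / ε))) αs (fun α => ?_) i x
  simpa only [entropicDual_eq_sum_add, add_le_add_iff_right] using hmax α βs

theorem entropicDual_marginal_pos [Nonempty n] (hε : ε ≠ 0) (hK : ∀ i j, 0 < K i j)
    (hmax : ∀ α β, entropicDual ε a b K α β ≤ entropicDual ε a b K αs βs) (i : m) :
    0 < a i := by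
  rw [← entropicDual_foc hε hmax i]
  have := Finset.sum_pos (fun j _ => mul_pos (hK i j) (exp_pos (βs j / ε))) Finset.univ_nonempty
  positivity

theorem entropicDual_potential_sub_le [Nonempty n] (hε : 0 < ε)
    (hmax : ∀ α β, entropicDual ε a b K α β ≤ entropicDual ε a b K αs βs)
    (ha1 : ∑ i, a i = 1) {ι Km KM : ℝ} (hι : 0 < ι) (hιa : ∀ i, ι ≤ a i) (hKm0 : 0 < Km)
    (hKm : ∀ i j, Km ≤ K i j) (hKM : ∀ i j, K i j ≤ KM) (i i' : m) :
    αs i - αs i' ≤ ε * -log (ι * Km / KM) := by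
  set E := ∑ j, exp (βs j / ε)
  set S := fun i => ∑ j, K i j * exp (βs j / ε)
  have hE : 0 < E := Finset.sum_pos (fun j _ => exp_pos _) Finset.univ_nonempty
  have hS_ge : ∀ i, Km * E ≤ S i := fun i => by
    rw [Finset.mul_sum]
    exact Finset.sum_le_sum fun j _ => mul_le_mul_of_nonneg_right (hKm i j) (exp_pos _).le
  have hS_le : ∀ i, S i ≤ KM * E := fun i => by
    rw [Finset.mul_sum]
    exact Finset.sum_le_sum fun j _ => mul_le_mul_of_nonneg_right (hKM i j) (exp_pos _).le
  have hS : ∀ i, 0 < S i := fun i => (mul_pos hKm0 hE).trans_le (hS_ge i)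
  have hKM0 : 0 < KM := pos_of_mul_pos_left ((hS i).trans_le (hS_le i)) hE.le
  have ha : ∀ i, 0 < a i := fun i => hι.trans_le (hιa i)
  have ha_le : ∀ i, a i ≤ 1 := fun i =>
    ha1 ▸ Finset.single_le_sum (fun k _ => (ha k).le) (Finset.mem_univ i)
  have hpot : ∀ i, αs i = ε * (log (a i) - log (S i)) := fun i =>
    eq_mul_log_sub_log_of_exp_div_mul_eq hε.ne' (hS i) (entropicDual_foc hε.ne' hmax i)
  have h1 := log_nonpos (ha i).le (ha_le i)
  have h2 := log_le_log hι (hιa i')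
  have h3 := log_le_log (by positivity) (hS_ge i)
  have h4 := log_le_log (hS i') (hS_le i')
  rw [log_mul hKm0.ne' hE.ne'] at h3
  rw [log_mul hKM0.ne' hE.ne'] at h4
  rw [hpot, hpot, ← mul_sub, log_div (by positivity) hKM0.ne', log_mul hι.ne' hKm0.ne']
  exact mul_le_mul_of_nonneg_left (by linarith) hε.le

end EntropicDual

theorem dual_optimal_oscillation_bound_general (n : ℕ) (hn : 0 < n) (ε : ℝ) (hε : 0 < ε)
    (a b : Fin n → ℝ)
    (ha1 : ∑ i, a i = 1) (hb1 : ∑ i, b i = 1)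
    (K : Matrix (Fin n) (Fin n) ℝ) (hK : ∀ i j, 0 < K i j)
    (f : (Fin n → ℝ) → (Fin n → ℝ) → ℝ)
    (hf : ∀ α β, f α β = ∑ i, α i * a i + ∑ j, β j * b j -
      ε * ∑ i, ∑ j, exp (α i / ε) * K i j * exp (β j / ε))
    (αs βs : Fin n → ℝ) (hmax : ∀ α β, f α β ≤ f αs βs) :
    haveI : Nonempty (Fin n) := Fin.pos_iff_nonempty.mp hn
    ((⨆ i, αs i) - ⨅ i, αs i ≤
      ε * (-log ((⨅ i, min (a i) (b i)) *
        (⨅ p : Fin n × Fin n, K p.1 p.2) / (⨆ p : Fin n × Fin n, K p.1 p.2)))) ∧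
    ((⨆ j, βs j) - ⨅ j, βs j ≤
      ε * (-log ((⨅ i, min (a i) (b i)) *
        (⨅ p : Fin n × Fin n, K p.1 p.2) / (⨆ p : Fin n × Fin n, K p.1 p.2)))) := by
  have : Nonempty (Fin n) := Fin.pos_iff_nonempty.mp hn
  obtain rfl : f = entropicDual ε a b K := funext₂ hf
  have hmaxT : ∀ β α, entropicDual ε b a Kᵀ β α ≤ entropicDual ε b a Kᵀ βs αs := by
    simpa only [← entropicDual_transpose] using fun β α => hmax α β
  have ha := entropicDual_marginal_pos hε.ne' hK hmax
  have hb := entropicDual_marginal_pos hε.ne' (fun j i => hK i j) hmaxT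
  have hι : 0 < ⨅ i, min (a i) (b i) := by
    obtain ⟨i, hi⟩ := exists_eq_ciInf_of_finite (f := fun i => min (a i) (b i))
    exact hi ▸ lt_min (ha i) (hb i)
  have hKm0 : 0 < ⨅ p : Fin n × Fin n, K p.1 p.2 := by
    obtain ⟨p, hp⟩ := exists_eq_ciInf_of_finite (f := fun p : Fin n × Fin n => K p.1 p.2)
    exact hp ▸ hK p.1 p.2
  have hιle : ∀ i, ⨅ i, min (a i) (b i) ≤ min (a i) (b i) := ciInf_le (Finite.bddBelow_range _)
  have hKm : ∀ i j, ⨅ p : Fin n × Fin n, K p.1 p.2 ≤ K i j := fun i j =>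
    ciInf_le (Finite.bddBelow_range _) (i, j)
  have hKM : ∀ i j, K i j ≤ ⨆ p : Fin n × Fin n, K p.1 p.2 := fun i j =>
    le_ciSup (f := fun p : Fin n × Fin n => K p.1 p.2) (Finite.bddAbove_range _) (i, j)
  exact ⟨ciSup_sub_ciInf_le (entropicDual_potential_sub_le hε hmax ha1 hι
      (fun i => (hιle i).trans (min_le_left _ _)) hKm0 hKm hKM),
    ciSup_sub_ciInf_le (entropicDual_potential_sub_le hε hmaxT hb1 hι
      (fun i => (hιle i).trans (min_le_right _ _)) hKm0 (fun j i => hKm i j) fun j i => hKM i j)⟩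

theorem dual_optimal_oscillation_bound (n : ℕ) (hn : 0 < n) (ε : ℝ) (hε : 0 < ε)
    (a b : Fin n → ℝ) (ha : ∀ i, 0 < a i) (hb : ∀ i, 0 < b i)
    (ha1 : ∑ i, a i = 1) (hb1 : ∑ i, b i = 1)
    (K : Matrix (Fin n) (Fin n) ℝ) (hK : ∀ i j, 0 < K i j)
    (f : (Fin n → ℝ) → (Fin n → ℝ) → ℝ)
    (hf : ∀ α β, f α β = ∑ i, α i * a i + ∑ j, β j * b j -
      ε * ∑ i, ∑ j, exp (α i / ε) * K i j * exp (β j / ε))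
    (αs βs : Fin n → ℝ) (hmax : ∀ α β, f α β ≤ f αs βs) :
    haveI : Nonempty (Fin n) := Fin.pos_iff_nonempty.mp hn
    ((⨆ i, αs i) - ⨅ i, αs i ≤
      ε * (-log ((⨅ i, min (a i) (b i)) *
        (⨅ p : Fin n × Fin n, K p.1 p.2) / (⨆ p : Fin n × Fin n, K p.1 p.2)))) ∧
    ((⨆ j, βs j) - ⨅ j, βs j ≤
      ε * (-log ((⨅ i, min (a i) (b i)) *
        (⨅ p : Fin n × Fin n, K p.1 p.2) / (⨆ p : Fin n × Fin n, K p.1 p.2)))) :=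
  dual_optimal_oscillation_bound_general n hn ε hε a b ha1 hb1 K hK f hf αs βs hmax
end
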